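/- arXiv:2111.10456 — 3 statements merged into one kernel-verified Lean document; each statement's English description precedes it below -/
import Mathlib

section
/- The set of root ancestral configurations of a binary rooted leaf-labeled tree, ordered by the relation 'a ≺ b iff b can be obtained from a by coalescing some (possibly no) pairs of lineages', is a bounded lattice: it has a least element (the configuration consisting of all leaves) and a greatest element (the configuration consisting of the two children of the root), and every pair of elements has a greatest lower bound and a least upper bound. -/
/-- Binary rooted trees (leaf labels abstracted away; leaves are identified
by their positions, encoded as lists of booleans). -/
inductive BTree : Type
  | leaf : BTree
  | node : BTree → BTree → BTree
  deriving DecidableEq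

namespace BTree

/-- A position in a binary tree: a path from the root, `false` = left, `true` = right. -/
abbrev Pos := List Bool

/-- The subtree rooted at a position (junk value `leaf` below a leaf). -/
def subtreeAt : BTree → Pos → BTree
  | t, [] => t
  | leaf, _ :: _ => leaf
  | node l _, false :: p => subtreeAt l p
  | node _ r, true :: p => subtreeAt r p

/-- `p` is a valid position (node) of the tree. -/
def isValidPos : BTree → Pos → Prop
  | _, [] => True
  | leaf, _ :: _ => False
  | node l _, false :: p => isValidPos l p
  | node _ r, true :: p => isValidPos r p

/-- The set of positions of the leaves of a tree. -/
def leafPositions : BTree → Finset Pos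
  | leaf => {([] : Pos)}
  | node l r =>
      (leafPositions l).image (false :: ·) ∪ (leafPositions r).image (true :: ·)

/-- The number of leaves of a tree. -/
def numLeaves (t : BTree) : ℕ := (leafPositions t).card

/-- The set of positions of the internal (non-leaf) nodes of a tree. -/
def internalPos : BTree → Finset Pos
  | leaf => ∅
  | node l r =>
      insert ([] : Pos)
        ((internalPos l).image (false :: ·) ∪ (internalPos r).image (true :: ·))

/-- A root ancestral configuration of `S`: an antichain of non-root nodes of `S`
whose descendant-leaf sets partition the leaf set, i.e. a set of valid non-root
positions such that every leaf position has exactly one weak ancestor in the set. -/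
def IsConfig (S : BTree) (A : Finset Pos) : Prop :=
  (∀ p ∈ A, isValidPos S p ∧ p ≠ []) ∧
  ∀ q ∈ leafPositions S, ∃! p, p ∈ A ∧ p <+: q

/-- The partial order on configurations: `ConfigLE A B` (that is, `A ≺ B`) iff `B`
is obtained from `A` by coalescing some (possibly no) pairs of lineages;
equivalently, every node of `A` is a weak descendant of some node of `B`. -/
def ConfigLE (A B : Finset Pos) : Prop :=
  ∀ p ∈ A, ∃ q ∈ B, q <+: p

/-- The covering relation on root ancestral configurations of `S`. -/
def Covers (S : BTree) (A B : Finset Pos) : Prop :=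
  IsConfig S A ∧ IsConfig S B ∧ ConfigLE A B ∧ A ≠ B ∧
  ∀ C, IsConfig S C → ConfigLE A C → ConfigLE C B → C = A ∨ C = B

/-- The maximal root configuration: the two children of the root. -/
def rootConfig : Finset Pos := {[false], [true]}

/-- The number of root ancestral configurations of `S`. -/
noncomputable def numConfigs (S : BTree) : ℕ := Nat.card {A : Finset Pos // IsConfig S A}

/-- A labeled history of `S`: a linear ordering of the internal nodes of `S`
in which every internal node appears after all of its internal descendants. -/
def IsLabHist (S : BTree) (L : List Pos) : Prop :=
  L.Nodup ∧ (∀ p, p ∈ L ↔ p ∈ internalPos S) ∧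
  ∀ i j : Fin L.length, L.get i <+: L.get j → (j : ℕ) ≤ (i : ℕ)

/-- The number of labeled histories of `S`. -/
noncomputable def numHist (S : BTree) : ℕ := Nat.card {L : List Pos // IsLabHist S L}

/-- The caterpillar tree on `n` leaves (`caterpillar 1` is a single leaf). -/
def caterpillar : ℕ → BTree
  | 0 => leaf
  | 1 => leaf
  | n + 2 => node (caterpillar (n + 1)) leaf

end BTree

namespace BTree

theorem aux_prefix_antisymm {p q : Pos} (h1 : p <+: q) (h2 : q <+: p) : p = q :=
  h1.eq_of_length (Nat.le_antisymm h1.length_le h2.length_le)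

theorem aux_leaf_valid : ∀ (S : BTree), ∀ q ∈ leafPositions S, isValidPos S q
  | leaf, q, hq => by
    simp only [leafPositions, Finset.mem_singleton] at hq
    subst hq; trivial
  | node l r, q, hq => by
    simp only [leafPositions, Finset.mem_union, Finset.mem_image] at hq
    rcases hq with ⟨a, ha, rfl⟩ | ⟨a, ha, rfl⟩
    · exact aux_leaf_valid l a ha
    · exact aux_leaf_valid r a ha

theorem aux_valid_ext : ∀ (S : BTree) (p : Pos), isValidPos S p →
    ∃ q ∈ leafPositions S, p <+: q
  | leaf, [], _ => ⟨[], by simp [leafPositions], List.prefix_refl _⟩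
  | leaf, _ :: _, h => absurd h (by simp [isValidPos])
  | node l r, [], _ => by
    obtain ⟨q, hq, -⟩ := aux_valid_ext l [] (by cases l <;> trivial)
    refine ⟨false :: q, ?_, List.nil_prefix⟩
    simp only [leafPositions, Finset.mem_union, Finset.mem_image]
    exact Or.inl ⟨q, hq, rfl⟩
  | node l r, false :: p, h => by
    obtain ⟨q, hq, hpq⟩ := aux_valid_ext l p h
    refine ⟨false :: q, ?_, List.cons_prefix_cons.2 ⟨rfl, hpq⟩⟩
    simp only [leafPositions, Finset.mem_union, Finset.mem_image]
    exact Or.inl ⟨q, hq, rfl⟩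
  | node l r, true :: p, h => by
    obtain ⟨q, hq, hpq⟩ := aux_valid_ext r p h
    refine ⟨true :: q, ?_, List.cons_prefix_cons.2 ⟨rfl, hpq⟩⟩
    simp only [leafPositions, Finset.mem_union, Finset.mem_image]
    exact Or.inr ⟨q, hq, rfl⟩

theorem aux_leaf_prefix : ∀ (S : BTree), ∀ q1 ∈ leafPositions S, ∀ q2 ∈ leafPositions S,
    q1 <+: q2 → q1 = q2
  | leaf, q1, hq1, q2, hq2, _ => by
    simp only [leafPositions, Finset.mem_singleton] at hq1 hq2
    rw [hq1, hq2]
  | node l r, q1, hq1, q2, hq2, hpre => by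
    simp only [leafPositions, Finset.mem_union, Finset.mem_image] at hq1 hq2
    rcases hq1 with ⟨a, ha, rfl⟩ | ⟨a, ha, rfl⟩ <;>
      rcases hq2 with ⟨b, hb, rfl⟩ | ⟨b, hb, rfl⟩ <;>
      rw [List.cons_prefix_cons] at hpre <;>
      first
        | exact congrArg _ (aux_leaf_prefix l a ha b hb hpre.2)
        | exact congrArg _ (aux_leaf_prefix r a ha b hb hpre.2)
        | exact absurd hpre.1 (by simp)

theorem aux_unique {S : BTree} {A : Finset Pos} (hA : IsConfig S A) {q p1 p2 : Pos}
    (hq : q ∈ leafPositions S) (h1 : p1 ∈ A) (h1p : p1 <+: q)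
    (h2 : p2 ∈ A) (h2p : p2 <+: q) : p1 = p2 := by
  obtain ⟨p, -, hu⟩ := hA.2 q hq
  rw [hu p1 ⟨h1, h1p⟩, hu p2 ⟨h2, h2p⟩]

theorem aux_join (S : BTree) (A B : Finset Pos) (hA : IsConfig S A) (hB : IsConfig S B) :
    ∃ M, IsConfig S M ∧ ConfigLE A M ∧ ConfigLE B M ∧
      ∀ C, IsConfig S C → ConfigLE A C → ConfigLE B C → ConfigLE M C := by
  classical
  have hA2 : ∀ q ∈ leafPositions S, ∃ p, (p ∈ A ∧ p <+: q) ∧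
      ∀ y, (y ∈ A ∧ y <+: q) → y = p := hA.2
  have hB2 : ∀ q ∈ leafPositions S, ∃ p, (p ∈ B ∧ p <+: q) ∧
      ∀ y, (y ∈ B ∧ y <+: q) → y = p := hB.2
  choose! fA hfA using hA2
  choose! fB hfB using hB2
  have hfAmem : ∀ q ∈ leafPositions S, fA q ∈ A := fun q hq => (hfA q hq).1.1
  have hfApre : ∀ q ∈ leafPositions S, fA q <+: q := fun q hq => (hfA q hq).1.2
  have hfAuniq : ∀ q ∈ leafPositions S, ∀ y, (y ∈ A ∧ y <+: q) → y = fA q :=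
    fun q hq => (hfA q hq).2
  have hfBmem : ∀ q ∈ leafPositions S, fB q ∈ B := fun q hq => (hfB q hq).1.1
  have hfBpre : ∀ q ∈ leafPositions S, fB q <+: q := fun q hq => (hfB q hq).1.2
  have hfBuniq : ∀ q ∈ leafPositions S, ∀ y, (y ∈ B ∧ y <+: q) → y = fB q :=
    fun q hq => (hfB q hq).2
  set g : Pos → Pos := fun q => if fA q <+: fB q then fA q else fB q with hg
  have hcomp : ∀ q ∈ leafPositions S, ¬ fA q <+: fB q → fB q <+: fA q := by
    intro q hq h
    rcases List.prefix_or_prefix_of_prefix (hfBpre q hq) (hfApre q hq) with h' | h'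
    · exact h'
    · exact absurd h' h
  have hgpre : ∀ q ∈ leafPositions S, g q <+: q := by
    intro q hq; by_cases h : fA q <+: fB q
    · simpa only [hg, if_pos h] using hfApre q hq
    · simpa only [hg, if_neg h] using hfBpre q hq
  have hgA : ∀ q ∈ leafPositions S, g q <+: fA q := by
    intro q hq; by_cases h : fA q <+: fB q
    · simp only [hg, if_pos h]; exact List.prefix_refl _
    · simpa only [hg, if_neg h] using hcomp q hq h
  have hgB : ∀ q ∈ leafPositions S, g q <+: fB q := by
    intro q hq; by_cases h : fA q <+: fB q
    · simpa only [hg, if_pos h] using h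
    · simp only [hg, if_neg h]; exact List.prefix_refl _
  have hgmem : ∀ q ∈ leafPositions S, g q ∈ A ∨ g q ∈ B := by
    intro q hq; by_cases h : fA q <+: fB q
    · simp only [hg, if_pos h]; exact Or.inl (hfAmem q hq)
    · simp only [hg, if_neg h]; exact Or.inr (hfBmem q hq)
  have key : ∀ q1 ∈ leafPositions S, ∀ q ∈ leafPositions S, g q1 <+: q → g q1 = g q := by
    intro q1 hq1 q hq hpre
    by_cases h1 : fA q1 <+: fB q1
    · have e1 : g q1 = fA q1 := by simp only [hg, if_pos h1]
      rw [e1] at hpre ⊢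
      have eA : fA q1 = fA q := hfAuniq q hq (fA q1) ⟨hfAmem q1 hq1, hpre⟩
      by_cases h2 : fA q <+: fB q
      · simp only [hg, if_pos h2]; exact eA
      · simp only [hg, if_neg h2]
        have hBA : fB q <+: fA q := hcomp q hq h2
        have hBq1 : fB q <+: q1 := by
          refine List.IsPrefix.trans ?_ (hfApre q1 hq1)
          rw [eA]; exact hBA
        have eB : fB q = fB q1 := hfBuniq q1 hq1 (fB q) ⟨hfBmem q hq, hBq1⟩
        have h1' : fA q1 <+: fB q := by rw [eB]; exact h1
        have hBA' : fB q <+: fA q1 := by rw [eA]; exact hBA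
        exact aux_prefix_antisymm h1' hBA'
    · have hA1 : fB q1 <+: fA q1 := hcomp q1 hq1 h1
      have e1 : g q1 = fB q1 := by simp only [hg, if_neg h1]
      rw [e1] at hpre ⊢
      have eB : fB q1 = fB q := hfBuniq q hq (fB q1) ⟨hfBmem q1 hq1, hpre⟩
      by_cases h2 : fA q <+: fB q
      · simp only [hg, if_pos h2]
        have hAq1 : fA q <+: q1 := by
          refine List.IsPrefix.trans ?_ (hfApre q1 hq1)
          refine List.IsPrefix.trans h2 ?_
          rw [← eB]; exact hA1
        have eA : fA q = fA q1 := hfAuniq q1 hq1 (fA q) ⟨hfAmem q hq, hAq1⟩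
        have h2' : fA q <+: fB q1 := by rw [eB]; exact h2
        have hA1' : fB q1 <+: fA q := by rw [eA]; exact hA1
        exact (aux_prefix_antisymm h2' hA1').symm
      · simp only [hg, if_neg h2]; exact eB
  refine ⟨(leafPositions S).image g, ⟨?_, ?_⟩, ?_, ?_, ?_⟩
  · intro p hp
    obtain ⟨q, hq, rfl⟩ := Finset.mem_image.1 hp
    rcases hgmem q hq with h | h
    · exact hA.1 _ h
    · exact hB.1 _ h
  · intro q hq
    refine ⟨g q, ⟨Finset.mem_image.2 ⟨q, hq, rfl⟩, hgpre q hq⟩, ?_⟩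
    rintro y ⟨hy, hypre⟩
    obtain ⟨q1, hq1, rfl⟩ := Finset.mem_image.1 hy
    exact key q1 hq1 q hq hypre
  · intro p hp
    obtain ⟨q, hq, hpq⟩ := aux_valid_ext S p (hA.1 p hp).1
    have : p = fA q := hfAuniq q hq p ⟨hp, hpq⟩
    exact ⟨g q, Finset.mem_image.2 ⟨q, hq, rfl⟩, this ▸ hgA q hq⟩
  · intro p hp
    obtain ⟨q, hq, hpq⟩ := aux_valid_ext S p (hB.1 p hp).1
    have : p = fB q := hfBuniq q hq p ⟨hp, hpq⟩
    exact ⟨g q, Finset.mem_image.2 ⟨q, hq, rfl⟩, this ▸ hgB q hq⟩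
  · intro C hC hAC hBC m hm
    obtain ⟨q, hq, rfl⟩ := Finset.mem_image.1 hm
    rcases hgmem q hq with h | h
    · exact hAC _ h
    · exact hBC _ h

theorem aux_meet (S : BTree) (A B : Finset Pos) (hA : IsConfig S A) (hB : IsConfig S B) :
    ∃ M, IsConfig S M ∧ ConfigLE M A ∧ ConfigLE M B ∧
      ∀ C, IsConfig S C → ConfigLE C A → ConfigLE C B → ConfigLE C M := by
  classical
  have hA2 : ∀ q ∈ leafPositions S, ∃ p, (p ∈ A ∧ p <+: q) ∧
      ∀ y, (y ∈ A ∧ y <+: q) → y = p := hA.2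
  have hB2 : ∀ q ∈ leafPositions S, ∃ p, (p ∈ B ∧ p <+: q) ∧
      ∀ y, (y ∈ B ∧ y <+: q) → y = p := hB.2
  choose! fA hfA using hA2
  choose! fB hfB using hB2
  have hfAmem : ∀ q ∈ leafPositions S, fA q ∈ A := fun q hq => (hfA q hq).1.1
  have hfApre : ∀ q ∈ leafPositions S, fA q <+: q := fun q hq => (hfA q hq).1.2
  have hfAuniq : ∀ q ∈ leafPositions S, ∀ y, (y ∈ A ∧ y <+: q) → y = fA q :=
    fun q hq => (hfA q hq).2
  have hfBmem : ∀ q ∈ leafPositions S, fB q ∈ B := fun q hq => (hfB q hq).1.1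
  have hfBpre : ∀ q ∈ leafPositions S, fB q <+: q := fun q hq => (hfB q hq).1.2
  have hfBuniq : ∀ q ∈ leafPositions S, ∀ y, (y ∈ B ∧ y <+: q) → y = fB q :=
    fun q hq => (hfB q hq).2
  set g : Pos → Pos := fun q => if fA q <+: fB q then fB q else fA q with hg
  have hcomp : ∀ q ∈ leafPositions S, ¬ fA q <+: fB q → fB q <+: fA q := by
    intro q hq h
    rcases List.prefix_or_prefix_of_prefix (hfBpre q hq) (hfApre q hq) with h' | h'
    · exact h'
    · exact absurd h' h
  have hgpre : ∀ q ∈ leafPositions S, g q <+: q := by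
    intro q hq; by_cases h : fA q <+: fB q
    · simpa only [hg, if_pos h] using hfBpre q hq
    · simpa only [hg, if_neg h] using hfApre q hq
  have hAg : ∀ q ∈ leafPositions S, fA q <+: g q := by
    intro q hq; by_cases h : fA q <+: fB q
    · simpa only [hg, if_pos h] using h
    · simp only [hg, if_neg h]; exact List.prefix_refl _
  have hBg : ∀ q ∈ leafPositions S, fB q <+: g q := by
    intro q hq; by_cases h : fA q <+: fB q
    · simp only [hg, if_pos h]; exact List.prefix_refl _
    · simpa only [hg, if_neg h] using hcomp q hq h
  have hgmem : ∀ q ∈ leafPositions S, g q ∈ A ∨ g q ∈ B := by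
    intro q hq; by_cases h : fA q <+: fB q
    · simp only [hg, if_pos h]; exact Or.inr (hfBmem q hq)
    · simp only [hg, if_neg h]; exact Or.inl (hfAmem q hq)
  have key : ∀ q1 ∈ leafPositions S, ∀ q ∈ leafPositions S, g q1 <+: q → g q1 = g q := by
    intro q1 hq1 q hq hpre
    have eA : fA q1 = fA q :=
      hfAuniq q hq (fA q1) ⟨hfAmem q1 hq1, (hAg q1 hq1).trans hpre⟩
    have eB : fB q1 = fB q :=
      hfBuniq q hq (fB q1) ⟨hfBmem q1 hq1, (hBg q1 hq1).trans hpre⟩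
    simp only [hg]
    rw [eA, eB]
  refine ⟨(leafPositions S).image g, ⟨?_, ?_⟩, ?_, ?_, ?_⟩
  · intro p hp
    obtain ⟨q, hq, rfl⟩ := Finset.mem_image.1 hp
    rcases hgmem q hq with h | h
    · exact hA.1 _ h
    · exact hB.1 _ h
  · intro q hq
    refine ⟨g q, ⟨Finset.mem_image.2 ⟨q, hq, rfl⟩, hgpre q hq⟩, ?_⟩
    rintro y ⟨hy, hypre⟩
    obtain ⟨q1, hq1, rfl⟩ := Finset.mem_image.1 hy
    exact key q1 hq1 q hq hypre
  · intro m hm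
    obtain ⟨q, hq, rfl⟩ := Finset.mem_image.1 hm
    exact ⟨fA q, hfAmem q hq, hAg q hq⟩
  · intro m hm
    obtain ⟨q, hq, rfl⟩ := Finset.mem_image.1 hm
    exact ⟨fB q, hfBmem q hq, hBg q hq⟩
  · intro C hC hCA hCB c hc
    obtain ⟨q, hq, hcq⟩ := aux_valid_ext S c (hC.1 c hc).1
    obtain ⟨a, ha, hac⟩ := hCA c hc
    obtain ⟨b, hb, hbc⟩ := hCB c hc
    have eA : a = fA q := hfAuniq q hq a ⟨ha, hac.trans hcq⟩
    have eB : b = fB q := hfBuniq q hq b ⟨hb, hbc.trans hcq⟩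
    refine ⟨g q, Finset.mem_image.2 ⟨q, hq, rfl⟩, ?_⟩
    by_cases h : fA q <+: fB q
    · simp only [hg, if_pos h]; rw [← eB]; exact hbc
    · simp only [hg, if_neg h]; rw [← eA]; exact hac

end BTree

open BTree

/-- The set of root ancestral configurations of a binary rooted tree, ordered by
coalescence, is a bounded lattice: `ConfigLE` is antisymmetric on configurations,
the configuration of all leaves is the least element, the configuration of the two
children of the root is the greatest element, and every pair of configurations has
a least upper bound and a greatest lower bound. -/
theorem configs_form_bounded_lattice (l r : BTree) :
    (IsConfig (node l r) (leafPositions (node l r)) ∧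
      ∀ A, IsConfig (node l r) A → ConfigLE (leafPositions (node l r)) A) ∧
    (IsConfig (node l r) rootConfig ∧
      ∀ A, IsConfig (node l r) A → ConfigLE A rootConfig) ∧
    (∀ A B, IsConfig (node l r) A → IsConfig (node l r) B →
      ConfigLE A B → ConfigLE B A → A = B) ∧
    (∀ A B, IsConfig (node l r) A → IsConfig (node l r) B →
      ∃ M, IsConfig (node l r) M ∧ ConfigLE A M ∧ ConfigLE B M ∧
        ∀ C, IsConfig (node l r) C → ConfigLE A C → ConfigLE B C → ConfigLE M C) ∧
    (∀ A B, IsConfig (node l r) A → IsConfig (node l r) B →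
      ∃ M, IsConfig (node l r) M ∧ ConfigLE M A ∧ ConfigLE M B ∧
        ∀ C, IsConfig (node l r) C → ConfigLE C A → ConfigLE C B → ConfigLE C M) := by
  have hleaf_ne : ∀ q ∈ leafPositions (node l r), q ≠ [] := by
    intro q hq
    simp only [leafPositions, Finset.mem_union, Finset.mem_image] at hq
    rcases hq with ⟨a, -, rfl⟩ | ⟨a, -, rfl⟩ <;> simp
  have hleafcfg : IsConfig (node l r) (leafPositions (node l r)) := by
    constructor
    · intro p hp
      exact ⟨aux_leaf_valid _ p hp, hleaf_ne p hp⟩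
    · intro q hq
      refine ⟨q, ⟨hq, List.prefix_refl _⟩, ?_⟩
      rintro y ⟨hy, hyp⟩
      exact aux_leaf_prefix _ y hy q hq hyp
  refine ⟨⟨hleafcfg, ?_⟩, ⟨⟨?_, ?_⟩, ?_⟩, ?_,
    fun A B hA hB => aux_join _ A B hA hB, fun A B hA hB => aux_meet _ A B hA hB⟩
  · -- leaves are the least configuration
    intro A hA p hp
    obtain ⟨q, ⟨hqA, hqp⟩, -⟩ := hA.2 p hp
    exact ⟨q, hqA, hqp⟩
  · -- rootConfig members are valid non-root positions
    intro p hp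
    simp only [rootConfig, Finset.mem_insert, Finset.mem_singleton] at hp
    rcases hp with rfl | rfl
    · exact ⟨by cases l <;> trivial, by simp⟩
    · exact ⟨by cases r <;> trivial, by simp⟩
  · -- rootConfig partitions the leaves
    intro q hq
    simp only [leafPositions, Finset.mem_union, Finset.mem_image] at hq
    rcases hq with ⟨a, ha, rfl⟩ | ⟨a, ha, rfl⟩
    · refine ⟨[false], ⟨by simp [rootConfig], List.cons_prefix_cons.2 ⟨rfl, List.nil_prefix⟩⟩, ?_⟩
      rintro y ⟨hy, hyp⟩
      simp only [rootConfig, Finset.mem_insert, Finset.mem_singleton] at hy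
      rcases hy with rfl | rfl
      · rfl
      · exact absurd (List.cons_prefix_cons.1 hyp).1 (by simp)
    · refine ⟨[true], ⟨by simp [rootConfig], List.cons_prefix_cons.2 ⟨rfl, List.nil_prefix⟩⟩, ?_⟩
      rintro y ⟨hy, hyp⟩
      simp only [rootConfig, Finset.mem_insert, Finset.mem_singleton] at hy
      rcases hy with rfl | rfl
      · exact absurd (List.cons_prefix_cons.1 hyp).1 (by simp)
      · rfl
  · -- rootConfig is the greatest configuration
    intro A hA p hp
    obtain ⟨-, hne⟩ := hA.1 p hp
    match p, hne with
    | b :: p', _ =>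
      refine ⟨[b], ?_, List.cons_prefix_cons.2 ⟨rfl, List.nil_prefix⟩⟩
      cases b <;> simp [rootConfig]
  · -- antisymmetry
    intro A B hA hB hAB hBA
    have sub : ∀ (X Y : Finset Pos), IsConfig (node l r) X → IsConfig (node l r) Y →
        ConfigLE X Y → ConfigLE Y X → X ⊆ Y := by
      intro X Y hX hY hXY hYX p hp
      obtain ⟨q, hqY, hqp⟩ := hXY p hp
      obtain ⟨p', hp'X, hp'q⟩ := hYX q hqY
      obtain ⟨q0, hq0, hpq0⟩ := aux_valid_ext _ p (hX.1 p hp).1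
      have hp' : p' = p :=
        aux_unique hX hq0 hp'X ((hp'q.trans hqp).trans hpq0) hp hpq0
      have : q = p := aux_prefix_antisymm hqp (hp' ▸ hp'q)
      exact this ▸ hqY
    exact Finset.Subset.antisymm (sub A B hA hB hAB hBA) (sub B A hB hA hBA hAB)
end

section
/- For a binary rooted labeled tree S with n leaves, every maximal chain in the lattice of root ancestral configurations of S has length exactly n−1 (i.e., contains n−1 elements), starting at the minimal configuration of all n leaves and ending at the maximal configuration consisting of the two children of the root. -/
/-!
Each covering step coalesces exactly one sibling pair, so along a maximal chain the number of
lineages drops by one at a time, from `n` down to `2`. The key point is that if `A ≺ B` strictly,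
pick a lineage `p ∈ A \ B` and its ancestor `q ∈ B`; a deepest lineage of `A` below `q` has its
sibling in `A` too, and coalescing that pair gives a configuration between `A` and `B` with one
lineage fewer.
-/

theorem List.IsChain.apply_getLast_add_length {α : Type*} {R : α → α → Prop} (f : α → ℕ)
    (hf : ∀ a b, R a b → f b + 1 = f a) :
    ∀ {a : α} {L : List α} (_ : (a :: L).IsChain R),
      f ((a :: L).getLast (List.cons_ne_nil a L)) + L.length = f a
  | _, [], _ => by simp
  | a, b :: L, h => by
    rw [List.isChain_cons_cons] at h
    rw [List.getLast_cons (List.cons_ne_nil b L), List.length_cons, ← hf a b h.1,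
      ← apply_getLast_add_length f hf h.2, add_assoc]

namespace BTree

variable {S : BTree} {A B : Finset Pos} {p q s ℓ : Pos}

lemma isValidPos_append :
    isValidPos S (p ++ q) ↔ isValidPos S p ∧ isValidPos (subtreeAt S p) q := by
  induction p generalizing S with
  | nil => simp [isValidPos, subtreeAt]
  | cons b p ih =>
    cases S with
    | leaf => cases b <;> simp [isValidPos, subtreeAt]
    | node l r => cases b <;> simp [isValidPos, subtreeAt, ih]

lemma isValidPos_append_singleton {b : Bool} :
    isValidPos S (s ++ [b]) ↔ isValidPos S s ∧ subtreeAt S s ≠ leaf := by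
  rw [isValidPos_append]
  cases subtreeAt S s <;> cases b <;> simp [isValidPos]

lemma isValidPos.of_prefix (hp : isValidPos S p) (hqp : q <+: p) : isValidPos S q := by
  obtain ⟨t, rfl⟩ := hqp
  exact (isValidPos_append.1 hp).1

lemma mem_leafPositions : ℓ ∈ leafPositions S ↔ isValidPos S ℓ ∧ subtreeAt S ℓ = leaf := by
  induction S generalizing ℓ with
  | leaf => cases ℓ <;> simp [leafPositions, isValidPos, subtreeAt]
  | node l r ihl ihr =>
    rcases ℓ with _ | ⟨_ | _, ℓ⟩ <;> simp [leafPositions, isValidPos, subtreeAt, ihl, ihr]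

lemma exists_mem_leafPositions_prefix (hp : isValidPos S p) :
    ∃ ℓ ∈ leafPositions S, p <+: ℓ := by
  induction S generalizing p with
  | leaf =>
    rcases p with _ | ⟨_ | _, p⟩
    · exact ⟨[], by simp [leafPositions], List.prefix_refl _⟩
    all_goals simp [isValidPos] at hp
  | node l r ihl ihr =>
    rcases p with _ | ⟨_ | _, p⟩
    · obtain ⟨ℓ, hℓ, -⟩ := ihl (p := []) (by simp [isValidPos])
      exact ⟨false :: ℓ, by simp [leafPositions, hℓ], List.nil_prefix⟩
    · obtain ⟨ℓ, hℓ, hpℓ⟩ := ihl hp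
      exact ⟨false :: ℓ, by simp [leafPositions, hℓ], List.cons_prefix_cons.2 ⟨rfl, hpℓ⟩⟩
    · obtain ⟨ℓ, hℓ, hpℓ⟩ := ihr hp
      exact ⟨true :: ℓ, by simp [leafPositions, hℓ], List.cons_prefix_cons.2 ⟨rfl, hpℓ⟩⟩

lemma exists_append_singleton_prefix_of_mem_leafPositions {b : Bool}
    (hℓ : ℓ ∈ leafPositions S) (hsℓ : s <+: ℓ) (hs : isValidPos S (s ++ [b])) :
    ∃ c : Bool, s ++ [c] <+: ℓ := by
  obtain ⟨_ | ⟨c, t⟩, rfl⟩ := hsℓ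
  · rw [List.append_nil, mem_leafPositions] at hℓ
    exact absurd hℓ.2 (isValidPos_append_singleton.1 hs).2
  · exact ⟨c, t, by simp⟩

namespace IsConfig

lemma eq_of_prefix_of_prefix {p' : Pos} (hA : IsConfig S A) (hℓ : ℓ ∈ leafPositions S)
    (hp : p ∈ A) (hpℓ : p <+: ℓ) (hp' : p' ∈ A) (hp'ℓ : p' <+: ℓ) : p = p' := by
  obtain ⟨x, -, hx⟩ := hA.2 ℓ hℓ
  rw [hx p ⟨hp, hpℓ⟩, hx p' ⟨hp', hp'ℓ⟩]

lemma eq_of_prefix (hA : IsConfig S A) (hq : q ∈ A) (hp : p ∈ A) (hqp : q <+: p) : q = p := by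
  obtain ⟨ℓ, hℓ, hpℓ⟩ := exists_mem_leafPositions_prefix (hA.1 p hp).1
  exact hA.eq_of_prefix_of_prefix hℓ hq (hqp.trans hpℓ) hp hpℓ

lemma notMem_of_append_mem {b : Bool} (hA : IsConfig S A) (hs : s ++ [b] ∈ A) : s ∉ A :=
  fun hsA => by simpa using hA.eq_of_prefix hsA hs (List.prefix_append s [b])

lemma eq_of_subset (hA : IsConfig S A) (hB : IsConfig S B) (hAB : A ⊆ B) : A = B := by
  refine hAB.antisymm fun q hq => ?_
  obtain ⟨ℓ, hℓ, hqℓ⟩ := exists_mem_leafPositions_prefix (hB.1 q hq).1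
  obtain ⟨p, ⟨hp, hpℓ⟩, -⟩ := hA.2 ℓ hℓ
  rwa [← hB.eq_of_prefix_of_prefix hℓ (hAB hp) hpℓ hq hqℓ]

lemma sibling_mem_of_deepest {b : Bool} (hA : IsConfig S A) (hs : s ++ [b] ∈ A)
    (hdeep : ∀ a ∈ A, s ++ [!b] <+: a → a.length ≤ s.length + 1) : s ++ [!b] ∈ A := by
  have hv : isValidPos S (s ++ [!b]) :=
    isValidPos_append_singleton.2 (isValidPos_append_singleton.1 (hA.1 _ hs).1)
  obtain ⟨ℓ, hℓ, hsℓ⟩ := exists_mem_leafPositions_prefix hv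
  obtain ⟨a, ⟨ha, haℓ⟩, -⟩ := hA.2 ℓ hℓ
  rcases List.prefix_or_prefix_of_prefix haℓ hsℓ with has | hsa
  · rcases List.prefix_concat_iff.1 has with rfl | has
    · exact ha
    · have hlen := has.length_le
      rw [hA.eq_of_prefix ha hs (has.trans (List.prefix_append s [b]))] at hlen
      simp at hlen
  · rwa [hsa.eq_of_length (le_antisymm hsa.length_le (by simpa using hdeep a ha hsa))]

lemma exists_children_mem (hA : IsConfig S A) (hp : p ∈ A) (hqp : q <+: p) (hq : q ∉ A) :
    ∃ s, q <+: s ∧ s ++ [false] ∈ A ∧ s ++ [true] ∈ A := by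
  classical
  obtain ⟨m, hmF, hmax⟩ := (A.filter (q <+: ·)).exists_max_image List.length
    ⟨p, Finset.mem_filter.2 ⟨hp, hqp⟩⟩
  obtain ⟨hm, hqm⟩ := Finset.mem_filter.1 hmF
  rcases m.eq_nil_or_concat' with rfl | ⟨s, b, rfl⟩
  · exact absurd (List.prefix_nil.1 hqm ▸ hm) hq
  have hqs : q <+: s := (List.prefix_concat_iff.1 hqm).resolve_left (by rintro rfl; exact hq hm)
  have hsib := hA.sibling_mem_of_deepest hm fun a ha hsa => by
    simpa using hmax a (Finset.mem_filter.2 ⟨ha, hqs.trans ((List.prefix_append _ _).trans hsa)⟩)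
  cases b
  · exact ⟨s, hqs, hm, hsib⟩
  · exact ⟨s, hqs, hsib, hm⟩

end IsConfig

def coalesce (A : Finset Pos) (s : Pos) : Finset Pos :=
  insert s (A \ {s ++ [false], s ++ [true]})

lemma mem_coalesce {c : Pos} :
    c ∈ coalesce A s ↔ c = s ∨ c ∈ A ∧ c ≠ s ++ [false] ∧ c ≠ s ++ [true] := by
  simp [coalesce]

lemma card_coalesce (h0 : s ++ [false] ∈ A) (h1 : s ++ [true] ∈ A) (hs : s ∉ A) :
    (coalesce A s).card + 1 = A.card := by
  have hsub : {s ++ [false], s ++ [true]} ⊆ A := Finset.insert_subset h0 (by simpa using h1)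
  have hpair : ({s ++ [false], s ++ [true]} : Finset Pos).card = 2 := Finset.card_pair (by simp)
  have h2 : 2 ≤ A.card := hpair ▸ Finset.card_le_card hsub
  rw [coalesce, Finset.card_insert_of_notMem (by simp [hs]), Finset.card_sdiff_of_subset hsub,
    hpair]
  omega

lemma configLE_coalesce : ConfigLE A (coalesce A s) := by
  intro p hp
  by_cases hchild : p = s ++ [false] ∨ p = s ++ [true]
  · refine ⟨s, mem_coalesce.2 (Or.inl rfl), ?_⟩
    rcases hchild with rfl | rfl <;> exact List.prefix_append _ _
  · push Not at hchild
    exact ⟨p, mem_coalesce.2 (Or.inr ⟨hp, hchild⟩), List.prefix_refl p⟩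

lemma coalesce_configLE (hAB : ConfigLE A B) (hq : q ∈ B) (hqs : q <+: s) :
    ConfigLE (coalesce A s) B := by
  intro c hc
  rcases mem_coalesce.1 hc with rfl | ⟨hc, -⟩
  · exact ⟨q, hq, hqs⟩
  · exact hAB c hc

lemma IsConfig.coalesce (hA : IsConfig S A) (hs : s ≠ []) (h0 : s ++ [false] ∈ A)
    (h1 : s ++ [true] ∈ A) : IsConfig S (coalesce A s) := by
  have hchild : ∀ c : Bool, s ++ [c] ∈ A := fun c => by cases c <;> assumption
  refine ⟨fun c hc => ?_, fun ℓ hℓ => ?_⟩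
  · rcases mem_coalesce.1 hc with rfl | ⟨hc, -⟩
    · exact ⟨(hA.1 _ h0).1.of_prefix (List.prefix_append _ _), hs⟩
    · exact hA.1 c hc
  obtain ⟨a, ⟨ha, haℓ⟩, huniq⟩ := hA.2 ℓ hℓ
  by_cases ha_child : ∃ c : Bool, a = s ++ [c]
  · obtain ⟨c, rfl⟩ := ha_child
    refine ⟨s, ⟨mem_coalesce.2 (Or.inl rfl), (List.prefix_append _ _).trans haℓ⟩, ?_⟩
    rintro x ⟨hx, hxℓ⟩
    rcases mem_coalesce.1 hx with rfl | ⟨hx, hx0, hx1⟩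
    · rfl
    · exact absurd (huniq x ⟨hx, hxℓ⟩) (by cases c <;> assumption)
  push Not at ha_child
  refine ⟨a, ⟨mem_coalesce.2 (Or.inr ⟨ha, ha_child false, ha_child true⟩), haℓ⟩, ?_⟩
  rintro x ⟨hx, hxℓ⟩
  rcases mem_coalesce.1 hx with rfl | ⟨hx, -⟩
  · obtain ⟨c, hc⟩ := exists_append_singleton_prefix_of_mem_leafPositions hℓ hxℓ (hA.1 _ h0).1
    exact absurd (huniq _ ⟨hchild c, hc⟩).symm (ha_child c)
  · exact huniq x ⟨hx, hxℓ⟩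

lemma Covers.card_add_one (h : Covers S A B) : B.card + 1 = A.card := by
  obtain ⟨hA, hB, hAB, hne, hbetween⟩ := h
  obtain ⟨p, hpA, hpB⟩ := Finset.not_subset.1 fun hsub => hne (hA.eq_of_subset hB hsub)
  obtain ⟨q, hqB, hqp⟩ := hAB p hpA
  have hqA : q ∉ A := fun hqA => hpB (hA.eq_of_prefix hqA hpA hqp ▸ hqB)
  obtain ⟨s, hqs, h0, h1⟩ := hA.exists_children_mem hpA hqp hqA
  have hs : s ≠ [] := by
    rintro rfl
    exact (hB.1 q hqB).2 (List.prefix_nil.1 hqs)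
  have hsA : s ∉ A := hA.notMem_of_append_mem h0
  rcases hbetween _ (hA.coalesce hs h0 h1) configLE_coalesce (coalesce_configLE hAB hqB hqs)
    with hCA | hCB
  · exact absurd (hCA ▸ mem_coalesce.2 (Or.inl rfl)) hsA
  · exact hCB ▸ card_coalesce h0 h1 hsA

end BTree

open BTree

theorem maximal_chain_length_general (l r : BTree) (L : List (Finset Pos))
    (hhead : L.head? = some (leafPositions (node l r)))
    (hlast : L.getLast? = some rootConfig)
    (hchain : L.Chain' (Covers (node l r))) :
    L.length = numLeaves (node l r) - 1 := by
  obtain _ | ⟨A, L⟩ := L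
  · simp at hhead
  obtain rfl : A = leafPositions (node l r) := by simpa using hhead
  rw [List.getLast?_eq_some_getLast (List.cons_ne_nil _ _), Option.some_inj] at hlast
  have hcard := List.IsChain.apply_getLast_add_length Finset.card
    (fun _ _ h => Covers.card_add_one h) hchain
  rw [hlast, show rootConfig.card = 2 from rfl] at hcard
  rw [numLeaves, ← hcard, List.length_cons]
  omega

/-- Every maximal chain in the lattice of root ancestral configurations of a binary
rooted tree with `n` leaves — i.e. every saturated chain from the all-leaves
configuration to the two-children-of-the-root configuration — has exactly `n - 1`
elements. -/
theorem maximal_chain_length (l r : BTree) (L : List (Finset Pos))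
    (hcfg : ∀ A ∈ L, IsConfig (node l r) A)
    (hhead : L.head? = some (leafPositions (node l r)))
    (hlast : L.getLast? = some rootConfig)
    (hchain : L.Chain' (Covers (node l r))) :
    L.length = numLeaves (node l r) - 1 :=
  maximal_chain_length_general l r L hhead hlast hchain
end

section
/- Let S be a binary rooted tree whose root has children subtrees S_ℓ and S_r. Then the number c(S) of root ancestral configurations of S satisfies c(S) = (c(S_ℓ) + 1)·(c(S_r) + 1), with the convention that c of a single leaf is 0. -/
open BTree

namespace BTreeAux
open BTree

lemma cons_injective (b : Bool) : Function.Injective (fun p : Pos => b :: p) :=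
  fun _ _ h => by simpa using h

/-- Strip the boolean `b` from the front of elements of `A`. -/
noncomputable def decomp (A : Finset Pos) (b : Bool) : Finset Pos :=
  A.preimage (fun p => b :: p) ((cons_injective b).injOn)

lemma mem_decomp {A : Finset Pos} {b : Bool} {p : Pos} :
    p ∈ decomp A b ↔ b :: p ∈ A := Finset.mem_preimage

lemma valid_cons {l r : BTree} {b : Bool} {p : Pos} :
    isValidPos (node l r) (b :: p) ↔ isValidPos (bif b then r else l) p := by
  cases b <;> rfl

lemma mem_leaf_cons {l r : BTree} {b : Bool} {q : Pos} :
    (b :: q) ∈ leafPositions (node l r) ↔ q ∈ leafPositions (bif b then r else l) := by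
  cases b <;> simp [leafPositions]

lemma exists_leaf_of_valid : ∀ (S : BTree) (p : Pos), isValidPos S p →
    ∃ q ∈ leafPositions S, p <+: q := by
  intro S
  induction S with
  | leaf =>
    intro p h
    cases p with
    | nil => exact ⟨[], by simp [leafPositions]⟩
    | cons b p => exact absurd h (by simp [isValidPos])
  | node l r ihl ihr =>
    intro p h
    cases p with
    | nil =>
      obtain ⟨q, hq, -⟩ := ihl [] (by simp [isValidPos])
      refine ⟨false :: q, ?_, List.nil_prefix⟩
      simp only [leafPositions, Finset.mem_union, Finset.mem_image]
      exact Or.inl ⟨q, hq, rfl⟩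
    | cons b p =>
      cases b with
      | false =>
        obtain ⟨q, hq, hpq⟩ := ihl p h
        refine ⟨false :: q, ?_, List.cons_prefix_cons.mpr ⟨rfl, hpq⟩⟩
        simp only [leafPositions, Finset.mem_union, Finset.mem_image]
        exact Or.inl ⟨q, hq, rfl⟩
      | true =>
        obtain ⟨q, hq, hpq⟩ := ihr p h
        refine ⟨true :: q, ?_, List.cons_prefix_cons.mpr ⟨rfl, hpq⟩⟩
        simp only [leafPositions, Finset.mem_union, Finset.mem_image]
        exact Or.inr ⟨q, hq, rfl⟩

lemma mem_union_of_valid : ∀ (S : BTree) (p : Pos), isValidPos S p →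
    p ∈ internalPos S ∪ leafPositions S := by
  intro S
  induction S with
  | leaf =>
    intro p h
    cases p with
    | nil => simp [internalPos, leafPositions]
    | cons b p => exact absurd h (by simp [isValidPos])
  | node l r ihl ihr =>
    intro p h
    cases p with
    | nil => simp [internalPos]
    | cons b p =>
      cases b with
      | false =>
        have := ihl p h
        simp [internalPos, leafPositions, Finset.mem_union] at this ⊢
        tauto
      | true =>
        have := ihr p h
        simp [internalPos, leafPositions, Finset.mem_union] at this ⊢
        tauto

instance configFinite (S : BTree) : Finite {A : Finset Pos // IsConfig S A} := by
  have hmem : ∀ A : {A : Finset Pos // IsConfig S A},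
      A.1 ∈ (internalPos S ∪ leafPositions S).powerset := by
    intro A
    rw [Finset.mem_powerset]
    intro p hp
    exact mem_union_of_valid S p (A.2.1 p hp).1
  exact Finite.of_injective
    (fun A => (⟨A.1, hmem A⟩ : {B // B ∈ (internalPos S ∪ leafPositions S).powerset}))
    (by intro a b h; simp only [Subtype.mk.injEq] at h; exact Subtype.ext h)

lemma config_eq_union {l r : BTree} {A : Finset Pos} (hA : IsConfig (node l r) A) :
    A = (decomp A false).image (false :: ·) ∪ (decomp A true).image (true :: ·) := by
  ext p
  simp only [Finset.mem_union, Finset.mem_image]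
  constructor
  · intro hp
    obtain ⟨-, hne⟩ := hA.1 p hp
    cases p with
    | nil => exact absurd rfl hne
    | cons b p =>
      cases b with
      | false => exact Or.inl ⟨p, mem_decomp.mpr hp, rfl⟩
      | true => exact Or.inr ⟨p, mem_decomp.mpr hp, rfl⟩
  · rintro (⟨p', hp', rfl⟩ | ⟨p', hp', rfl⟩) <;> exact mem_decomp.mp hp'

lemma decomp_spec {l r : BTree} {A : Finset Pos} (hA : IsConfig (node l r) A) (b : Bool) :
    decomp A b = {([] : Pos)} ∨ IsConfig (bif b then r else l) (decomp A b) := by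
  obtain ⟨hval, huniq⟩ := hA
  by_cases h0 : ([] : Pos) ∈ decomp A b
  · left
    ext p
    simp only [Finset.mem_singleton]
    constructor
    · intro hp
      have hbA : b :: p ∈ A := mem_decomp.mp hp
      have hv : isValidPos (bif b then r else l) p := valid_cons.mp (hval _ hbA).1
      obtain ⟨q, hq, hpq⟩ := exists_leaf_of_valid _ p hv
      have hqn : (b :: q) ∈ leafPositions (node l r) := mem_leaf_cons.mpr hq
      obtain ⟨w, -, hw⟩ := huniq _ hqn
      have h1 := hw (b :: p) ⟨hbA, List.cons_prefix_cons.mpr ⟨rfl, hpq⟩⟩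
      have h2 := hw (b :: []) ⟨mem_decomp.mp h0, List.cons_prefix_cons.mpr ⟨rfl, List.nil_prefix⟩⟩
      have : (b :: p : Pos) = [b] := h1.trans h2.symm
      simpa using this
    · rintro rfl; exact h0
  · right
    constructor
    · intro p hp
      refine ⟨valid_cons.mp (hval _ (mem_decomp.mp hp)).1, ?_⟩
      rintro rfl; exact h0 hp
    · intro q hq
      have hqn : (b :: q) ∈ leafPositions (node l r) := mem_leaf_cons.mpr hq
      obtain ⟨w, ⟨hwA, hwpre⟩, hw⟩ := huniq _ hqn
      have hwne : w ≠ [] := (hval _ hwA).2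
      obtain ⟨b', w', rfl⟩ : ∃ b' w', w = b' :: w' := by
        cases w with
        | nil => exact absurd rfl hwne
        | cons b' w' => exact ⟨b', w', rfl⟩
      obtain ⟨rfl, hw'⟩ := List.cons_prefix_cons.mp hwpre
      refine ⟨w', ⟨mem_decomp.mpr hwA, hw'⟩, ?_⟩
      intro y ⟨hy, hypre⟩
      have := hw (b' :: y) ⟨mem_decomp.mp hy, List.cons_prefix_cons.mpr ⟨rfl, hypre⟩⟩
      simpa using this

lemma config_union {l r : BTree} {Bl Br : Finset Pos}
    (hl : Bl = {([] : Pos)} ∨ IsConfig l Bl) (hr : Br = {([] : Pos)} ∨ IsConfig r Br) :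
    IsConfig (node l r) (Bl.image (false :: ·) ∪ Br.image (true :: ·)) := by
  constructor
  · intro p hp
    simp only [Finset.mem_union, Finset.mem_image] at hp
    rcases hp with ⟨p', hp', rfl⟩ | ⟨p', hp', rfl⟩
    · refine ⟨valid_cons.mpr ?_, by simp⟩
      rcases hl with rfl | hc
      · simp only [Finset.mem_singleton] at hp'; subst hp'; simp [isValidPos]
      · exact (hc.1 p' hp').1
    · refine ⟨valid_cons.mpr ?_, by simp⟩
      rcases hr with rfl | hc
      · simp only [Finset.mem_singleton] at hp'; subst hp'; simp [isValidPos]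
      · exact (hc.1 p' hp').1
  · intro q hq
    simp only [leafPositions, Finset.mem_union, Finset.mem_image] at hq
    rcases hq with ⟨q', hq', rfl⟩ | ⟨q', hq', rfl⟩
    · rcases hl with rfl | hc
      · refine ⟨[false], ⟨by simp, List.cons_prefix_cons.mpr ⟨rfl, List.nil_prefix⟩⟩, ?_⟩
        rintro y ⟨hy, hypre⟩
        simp only [Finset.mem_union, Finset.mem_image, Finset.mem_singleton] at hy
        rcases hy with ⟨p', rfl, rfl⟩ | ⟨p', hp', rfl⟩
        · rfl
        · exact absurd (List.cons_prefix_cons.mp hypre).1 (by simp)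
      · obtain ⟨w, ⟨hwB, hwpre⟩, hw⟩ := hc.2 q' hq'
        refine ⟨false :: w, ⟨by simp only [Finset.mem_union, Finset.mem_image]; exact Or.inl ⟨w, hwB, rfl⟩,
          List.cons_prefix_cons.mpr ⟨rfl, hwpre⟩⟩, ?_⟩
        rintro y ⟨hy, hypre⟩
        simp only [Finset.mem_union, Finset.mem_image] at hy
        rcases hy with ⟨p', hp', rfl⟩ | ⟨p', hp', rfl⟩
        · obtain ⟨-, hpre⟩ := List.cons_prefix_cons.mp hypre
          exact congrArg _ (hw p' ⟨hp', hpre⟩)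
        · exact absurd (List.cons_prefix_cons.mp hypre).1 (by simp)
    · rcases hr with rfl | hc
      · refine ⟨[true], ⟨by simp, List.cons_prefix_cons.mpr ⟨rfl, List.nil_prefix⟩⟩, ?_⟩
        rintro y ⟨hy, hypre⟩
        simp only [Finset.mem_union, Finset.mem_image, Finset.mem_singleton] at hy
        rcases hy with ⟨p', hp', rfl⟩ | ⟨p', rfl, rfl⟩
        · exact absurd (List.cons_prefix_cons.mp hypre).1 (by simp)
        · rfl
      · obtain ⟨w, ⟨hwB, hwpre⟩, hw⟩ := hc.2 q' hq'
        refine ⟨true :: w, ⟨by simp only [Finset.mem_union, Finset.mem_image]; exact Or.inr ⟨w, hwB, rfl⟩,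
          List.cons_prefix_cons.mpr ⟨rfl, hwpre⟩⟩, ?_⟩
        rintro y ⟨hy, hypre⟩
        simp only [Finset.mem_union, Finset.mem_image] at hy
        rcases hy with ⟨p', hp', rfl⟩ | ⟨p', hp', rfl⟩
        · exact absurd (List.cons_prefix_cons.mp hypre).1 (by simp)
        · obtain ⟨-, hpre⟩ := List.cons_prefix_cons.mp hypre
          exact congrArg _ (hw p' ⟨hp', hpre⟩)

lemma decomp_union (Bl Br : Finset Pos) (b : Bool) :
    decomp (Bl.image (false :: ·) ∪ Br.image (true :: ·)) b = bif b then Br else Bl := by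
  ext p
  cases b <;> simp [mem_decomp]

lemma config_ne_singleton {S : BTree} {A : Finset Pos} (h : IsConfig S A) :
    A ≠ {([] : Pos)} := by
  intro hEq
  have : ([] : Pos) ∈ A := by rw [hEq]; simp
  exact (h.1 _ this).2 rfl

/-- Raw finset of a side option. -/
def raw {t : BTree} (o : Option {A : Finset Pos // IsConfig t A}) : Finset Pos :=
  o.elim {([] : Pos)} Subtype.val

lemma raw_spec {t : BTree} (o : Option {A : Finset Pos // IsConfig t A}) :
    raw o = {([] : Pos)} ∨ IsConfig t (raw o) := by
  cases o with
  | none => exact Or.inl rfl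
  | some B => exact Or.inr B.2

noncomputable def configEquiv (l r : BTree) :
    {A : Finset Pos // IsConfig (node l r) A} ≃
      (Option {A : Finset Pos // IsConfig l A}) × (Option {A : Finset Pos // IsConfig r A}) where
  toFun := fun A =>
    (if h : decomp A.1 false = {([] : Pos)} then none
      else some ⟨decomp A.1 false, ((decomp_spec A.2 false).resolve_left h)⟩,
     if h : decomp A.1 true = {([] : Pos)} then none
      else some ⟨decomp A.1 true, ((decomp_spec A.2 true).resolve_left h)⟩)
  invFun := fun x =>
    ⟨(raw x.1).image (false :: ·) ∪ (raw x.2).image (true :: ·),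
      config_union (raw_spec x.1) (raw_spec x.2)⟩
  left_inv := by
    rintro ⟨A, hA⟩
    apply Subtype.ext
    simp only
    have h1 : raw (if h : decomp A false = {([] : Pos)} then none
        else some (⟨decomp A false, ((decomp_spec hA false).resolve_left h)⟩ :
          {A : Finset Pos // IsConfig l A})) = decomp A false := by
      split <;> simp_all [raw]
    have h2 : raw (if h : decomp A true = {([] : Pos)} then none
        else some (⟨decomp A true, ((decomp_spec hA true).resolve_left h)⟩ :
          {A : Finset Pos // IsConfig r A})) = decomp A true := by
      split <;> simp_all [raw]
    rw [h1, h2]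
    exact (config_eq_union hA).symm
  right_inv := by
    rintro ⟨x, y⟩
    simp only [decomp_union, cond_false, cond_true, Prod.mk.injEq]
    constructor
    · cases x with
      | none => simp [raw]
      | some B =>
        have : raw (some B) ≠ {([] : Pos)} := config_ne_singleton B.2
        rw [dif_neg this]
        rfl
    · cases y with
      | none => simp [raw]
      | some B =>
        have : raw (some B) ≠ {([] : Pos)} := config_ne_singleton B.2
        rw [dif_neg this]
        rfl

end BTreeAux

open BTreeAux


/-- If the root subtrees of `S` are `S_ℓ` and `S_r`, then
`c(S) = (c(S_ℓ) + 1) * (c(S_r) + 1)`, where `c` counts root ancestral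
configurations (and `c` of a single leaf is `0`). -/
theorem numConfigs_node (l r : BTree) :
    numConfigs (node l r) = (numConfigs l + 1) * (numConfigs r + 1) := by
  rw [numConfigs, Nat.card_congr (configEquiv l r), Nat.card_prod,
    Finite.card_option, Finite.card_option]
  rfl
end
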